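/- For every z ≥ 1, the map d_com^{(z)} on partitions of a fixed integer N is order-reversing for the dominance order: if p ≤ q in dominance order (both partitions of N), then d_com^{(z)}(q) ≤ d_com^{(z)}(p) in dominance order. -/

import Mathlib

namespace PartStmt

/-- Sorted (nonincreasing) list of parts of a partition, represented as a multiset. -/
def parts (m : Multiset ℕ) : List ℕ := (m.sort (· ≤ ·)).reverse

/-- The `i`-th part (0-indexed), with `0` beyond the length. -/
def part (m : Multiset ℕ) (i : ℕ) : ℕ := (parts m).getD i 0

/-- Partial sum of the `k` largest parts. -/
def psum (m : Multiset ℕ) (k : ℕ) : ℕ := ∑ i ∈ Finset.range k, part m i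

/-- Dominance order: every partial sum of `l` is at most that of `m`. -/
def Dom (l m : Multiset ℕ) : Prop := ∀ k, psum l k ≤ psum m k

/-- Strict dominance. -/
def StrictDom (l m : Multiset ℕ) : Prop := Dom l m ∧ l ≠ m

/-- Componentwise sum of two partitions (sorted part sequences added, zero padding). -/
def psAdd (l m : Multiset ℕ) : Multiset ℕ :=
  ((Multiset.range (Multiset.card l + Multiset.card m)).map
    (fun i => part l i + part m i)).filter (0 < ·)

/-- The transpose (conjugate) partition: the `j`-th column length `#{x ∈ m : x ≥ j+1}`. -/
def transpose (m : Multiset ℕ) : Multiset ℕ :=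
  ((Multiset.range m.sum).map
    (fun j => Multiset.card (m.filter (fun x => j + 1 ≤ x)))).filter (0 < ·)

/-- The partition `s(m; z) = (z^a, b)` where `m = a z + b`, `0 ≤ b < z`. -/
def sPart (m z : ℕ) : Multiset ℕ :=
  Multiset.replicate (m / z) z + (if m % z = 0 then 0 else {m % z})

/-- `d_com^{(z)}(p) = Σ_i s(p_i; z)` (componentwise partition sum). -/
def dcom (z : ℕ) (p : Multiset ℕ) : Multiset ℕ :=
  (parts p).foldr (fun x acc => psAdd (sPart x z) acc) 0

/-- A multiset is a partition when all its parts are positive. -/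
def IsPartition (m : Multiset ℕ) : Prop := ∀ x ∈ m, 0 < x


lemma sum_getD (L : List ℕ) (k : ℕ) :
    ∑ i ∈ Finset.range k, L.getD i 0 = (L.take k).sum := by
  induction L generalizing k with
  | nil => simp
  | cons a L ih =>
    cases k with
    | zero => simp
    | succ k =>
      rw [Finset.sum_range_succ']
      simp only [List.getD_cons_succ, List.getD_cons_zero, List.take_succ_cons, List.sum_cons]
      rw [ih]; omega

lemma parts_coe (L : List ℕ) (h : L.Pairwise (· ≥ ·)) : parts (↑L) = L := by
  have p1 : (Multiset.sort (L : Multiset ℕ) (· ≤ ·)).Perm L :=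
    Multiset.coe_eq_coe.1 (Multiset.sort_eq _ _)
  have h1 : ((L : Multiset ℕ).sort (· ≤ ·)) = L.reverse :=
    List.Perm.eq_of_pairwise'
      (Multiset.pairwise_sort _ _) (List.pairwise_reverse.2 h) (p1.trans (List.reverse_perm L).symm)
  unfold parts
  rw [h1, List.reverse_reverse]

lemma coe_parts (m : Multiset ℕ) : (↑(parts m) : Multiset ℕ) = m := by
  unfold parts
  rw [← Multiset.coe_reverse, List.reverse_reverse, Multiset.sort_eq]

lemma parts_sorted (m : Multiset ℕ) : (parts m).Pairwise (· ≥ ·) :=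
  List.pairwise_reverse.2 (Multiset.pairwise_sort m (· ≤ ·))

lemma parts_length (m : Multiset ℕ) : (parts m).length = Multiset.card m := by
  have := congrArg Multiset.card (coe_parts m)
  simpa using this

lemma getD_anti {L : List ℕ} (h : L.Pairwise (· ≥ ·)) {i j : ℕ} (hij : i ≤ j) :
    L.getD j 0 ≤ L.getD i 0 := by
  rcases lt_or_ge j L.length with hj | hj
  · have hi : i < L.length := lt_of_le_of_lt hij hj
    rw [List.getD_eq_getElem _ _ hj, List.getD_eq_getElem _ _ hi]
    rcases eq_or_lt_of_le hij with rfl | hlt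
    · exact le_refl _
    · exact List.pairwise_iff_get.1 h ⟨i, hi⟩ ⟨j, hj⟩ hlt
  · rw [List.getD_eq_default _ _ hj]
    exact Nat.zero_le _

lemma part_anti (m : Multiset ℕ) {i j : ℕ} (hij : i ≤ j) : part m j ≤ part m i :=
  getD_anti (parts_sorted m) hij

lemma part_eq_zero (m : Multiset ℕ) {i : ℕ} (hi : Multiset.card m ≤ i) : part m i = 0 := by
  unfold part
  rw [List.getD_eq_default]
  rw [parts_length]; exact hi

lemma psum_eq (m : Multiset ℕ) (k : ℕ) : psum m k = ((parts m).take k).sum :=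
  sum_getD (parts m) k

lemma getD_map_range (f : ℕ → ℕ) (n i : ℕ) :
    ((List.range n).map f).getD i 0 = if i < n then f i else 0 := by
  rcases lt_or_ge i n with hi | hi
  · have hlen : i < ((List.range n).map f).length := by simpa using hi
    rw [List.getD_eq_getElem _ _ hlen, if_pos hi]
    simp
  · rw [List.getD_eq_default, if_neg (not_lt.2 hi)]
    simpa using hi

lemma filter_getD : ∀ {L : List ℕ}, L.Pairwise (· ≥ ·) → ∀ i,
    (L.filter (fun x => 0 < x)).getD i 0 = L.getD i 0 := by
  intro L
  induction L with
  | nil => intro _ i; simp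
  | cons a L ih =>
    intro h i
    rcases List.pairwise_cons.1 h with ⟨ha, hL⟩
    rcases Nat.eq_zero_or_pos a with rfl | hpos
    · have hall : ∀ x ∈ (0 : ℕ) :: L, x = 0 := by
        intro x hx
        rcases List.mem_cons.1 hx with rfl | hx
        · rfl
        · exact Nat.le_zero.1 (ha x hx)
      have hf : List.filter (fun x => 0 < x) ((0:ℕ) :: L) = [] := by
        rw [List.filter_eq_nil_iff]
        intro x hx
        simp [hall x hx]
      rw [hf]
      rcases lt_or_ge i ((0:ℕ) :: L).length with hi | hi
      · rw [List.getD_eq_getElem _ _ hi]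
        simp [hall _ (List.getElem_mem hi)]
      · rw [List.getD_eq_default _ _ hi]; simp
    · have hf : List.filter (fun x => 0 < x) (a :: L) = a :: List.filter (fun x => 0 < x) L := by
        rw [List.filter_cons_of_pos]
        simpa using hpos
      rw [hf]
      cases i with
      | zero => simp
      | succ i => simpa using ih hL i

lemma psum_psAdd (l m : Multiset ℕ) (k : ℕ) :
    psum (psAdd l m) k = psum l k + psum m k := by
  set n := Multiset.card l + Multiset.card m with hn
  set f : ℕ → ℕ := fun i => part l i + part m i with hfdef
  have hfanti : ∀ {i j : ℕ}, i ≤ j → f j ≤ f i := by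
    intro i j hij
    exact Nat.add_le_add (part_anti l hij) (part_anti m hij)
  have hfzero : ∀ i, n ≤ i → f i = 0 := by
    intro i hi
    have h1 : part l i = 0 := part_eq_zero l (le_trans (Nat.le_add_right _ _) hi)
    have h2 : part m i = 0 := part_eq_zero m (le_trans (Nat.le_add_left _ _) hi)
    simp [hfdef, h1, h2]
  have hLs : ((List.range n).map f).Pairwise (· ≥ ·) := by
    rw [List.pairwise_map]
    exact List.Pairwise.imp (fun hab => hfanti (le_of_lt hab)) (List.pairwise_lt_range (n := n))
  have hcoe : psAdd l m = ↑(((List.range n).map f).filter (fun x => 0 < x)) := by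
    unfold psAdd
    rw [← Multiset.coe_range, Multiset.map_coe, ← hn, ← hfdef]
    rfl
  have hsorted : (((List.range n).map f).filter (fun x => 0 < x)).Pairwise (· ≥ ·) :=
    List.Pairwise.sublist List.filter_sublist hLs
  have hparts : parts (psAdd l m) = ((List.range n).map f).filter (fun x => 0 < x) := by
    rw [hcoe, parts_coe _ hsorted]
  unfold psum
  rw [← Finset.sum_add_distrib]
  apply Finset.sum_congr rfl
  intro i _
  show (parts (psAdd l m)).getD i 0 = part l i + part m i
  rw [hparts, filter_getD hLs i, getD_map_range]
  rcases lt_or_ge i n with hi | hi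
  · rw [if_pos hi]
  · rw [if_neg (not_lt.2 hi)]
    have h0 := hfzero i hi
    simp only [hfdef] at h0
    omega


lemma map_sum_parts (m : Multiset ℕ) (g : ℕ → ℕ) :
    (m.map g).sum = ((parts m).map g).sum := by
  conv_lhs => rw [← coe_parts m]
  rw [Multiset.map_coe, Multiset.sum_coe]

lemma psum_sPart {z : ℕ} (hz : 1 ≤ z) (x k : ℕ) :
    psum (sPart x z) k = min (k * z) x := by
  have hbz : x % z < z := Nat.mod_lt _ hz
  have hxz : z * (x / z) + x % z = x := Nat.div_add_mod x z
  set L : List ℕ := List.replicate (x / z) z ++ (if x % z = 0 then [] else [x % z]) with hL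
  have hcoe : sPart x z = ↑L := by
    unfold sPart
    rcases eq_or_ne (x % z) 0 with h0 | h0
    · simp [hL, h0, ← Multiset.coe_replicate]
    · rw [hL, if_neg h0, if_neg h0,
        ← Multiset.coe_replicate, ← Multiset.coe_singleton, ← Multiset.coe_add]
  have hsorted : L.Pairwise (· ≥ ·) := by
    rw [hL, List.pairwise_append]
    refine ⟨?_, ?_, ?_⟩
    · simp [List.pairwise_replicate]
    · rcases eq_or_ne (x % z) 0 with h0 | h0 <;> simp [h0]
    · intro u hu v hv
      have hu' : u = z := List.eq_of_mem_replicate hu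
      rcases eq_or_ne (x % z) 0 with h0 | h0
      · rw [if_pos h0] at hv; simp at hv
      · rw [if_neg h0] at hv
        simp only [List.mem_singleton] at hv
        subst hu'; subst hv
        omega
  rw [hcoe, psum_eq, parts_coe L hsorted]
  rcases le_or_gt k (x / z) with hk | hk
  · have hlen : k ≤ (List.replicate (x / z) z).length := by simpa using hk
    rw [hL, List.take_append_of_le_length hlen, List.take_replicate]
    rw [min_eq_left hk, List.sum_const_nat]
    have hle : k * z ≤ x :=
      calc k * z ≤ (x / z) * z := Nat.mul_le_mul_right _ hk
        _ ≤ x := Nat.div_mul_le_self x z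
    omega
  · have hlen : L.length ≤ k := by
      rw [hL]
      rcases eq_or_ne (x % z) 0 with h0 | h0 <;> simp [h0] <;> omega
    rw [List.take_of_length_le hlen]
    have hsum : L.sum = x := by
      rcases eq_or_ne (x % z) 0 with h0 | h0
      · rw [hL, if_pos h0, List.append_nil, List.sum_const_nat, Nat.mul_comm]
        omega
      · rw [hL, if_neg h0, List.sum_append, List.sum_const_nat]
        simp only [List.sum_cons, List.sum_nil]
        rw [Nat.mul_comm]
        omega
    rw [hsum]
    have hge : x < k * z := by
      calc x = z * (x/z) + x % z := hxz.symm
        _ < z * (x/z) + z := by omega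
        _ = (x/z + 1) * z := by ring
        _ ≤ k * z := Nat.mul_le_mul_right _ hk
    omega

lemma psum_zero_multiset (k : ℕ) : psum (0 : Multiset ℕ) k = 0 := by
  unfold psum part parts
  simp [Multiset.sort_zero]

lemma psum_dcom {z : ℕ} (hz : 1 ≤ z) (p : Multiset ℕ) (k : ℕ) :
    psum (dcom z p) k = (p.map (fun x => min (k * z) x)).sum := by
  have key : ∀ L : List ℕ,
      psum (L.foldr (fun x acc => psAdd (sPart x z) acc) 0) k
        = (L.map (fun x => min (k * z) x)).sum := by
    intro L
    induction L with
    | nil => simpa using psum_zero_multiset k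
    | cons a L ih =>
      simp only [List.foldr_cons, List.map_cons, List.sum_cons]
      rw [psum_psAdd, ih, psum_sPart hz]
  unfold dcom
  rw [key (parts p), ← map_sum_parts]

lemma psum_le (m : Multiset ℕ) (k t : ℕ) :
    psum m k ≤ k * t + (m.map (fun x => x - t)).sum := by
  have key : ∀ (L : List ℕ) (k : ℕ),
      (L.take k).sum ≤ k * t + (L.map (fun x => x - t)).sum := by
    intro L
    induction L with
    | nil => intro k; simp
    | cons a L ih =>
      intro k
      cases k with
      | zero => simp
      | succ k =>
        simp only [List.take_succ_cons, List.sum_cons, List.map_cons]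
        have := ih k
        have ha : a ≤ t + (a - t) := by omega
        calc a + (L.take k).sum ≤ (t + (a - t)) + (k * t + (L.map (fun x => x - t)).sum) :=
              Nat.add_le_add ha this
          _ = (k + 1) * t + (a - t + (L.map (fun x => x - t)).sum) := by ring
  rw [psum_eq, map_sum_parts]
  exact key (parts m) k

lemma exists_psum_eq (m : Multiset ℕ) (t : ℕ) :
    ∃ k, psum m k = k * t + (m.map (fun x => x - t)).sum := by
  have key : ∀ L : List ℕ, L.Pairwise (· ≥ ·) →
      (L.take (L.countP (fun x => t ≤ x))).sum
        = (L.countP (fun x => t ≤ x)) * t + (L.map (fun x => x - t)).sum := by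
    intro L
    induction L with
    | nil => intro _; simp
    | cons a L ih =>
      intro h
      rcases List.pairwise_cons.1 h with ⟨ha, hL⟩
      rcases le_or_gt t a with hta | hta
      · rw [List.countP_cons_of_pos (by simpa using hta)]
        simp only [List.take_succ_cons, List.sum_cons, List.map_cons]
        rw [ih hL]
        have : a = t + (a - t) := by omega
        ring_nf
        omega
      · have hc : (a :: L).countP (fun x => t ≤ x) = 0 := by
          rw [List.countP_eq_zero]
          intro x hx
          rcases List.mem_cons.1 hx with rfl | hx
          · simpa using (by omega : ¬ t ≤ x)
          · have := ha x hx
            simpa using (by omega : ¬ t ≤ x)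
        rw [hc]
        simp only [List.take_zero, List.sum_nil, Nat.zero_mul, Nat.zero_add]
        symm
        apply List.sum_eq_zero
        intro y hy
        rcases List.mem_map.1 hy with ⟨x, hx, rfl⟩
        rcases List.mem_cons.1 hx with rfl | hx
        · omega
        · have := ha x hx
          omega
  refine ⟨(parts m).countP (fun x => t ≤ x), ?_⟩
  rw [psum_eq, map_sum_parts]
  exact key (parts m) (parts_sorted m)

lemma sum_min_add (m : Multiset ℕ) (t : ℕ) :
    (m.map (fun x => min t x)).sum + (m.map (fun x => x - t)).sum = m.sum := by
  induction m using Multiset.induction_on with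
  | empty => simp
  | cons a s ih =>
    simp only [Multiset.map_cons, Multiset.sum_cons]
    omega

/-- `d_com^{(z)}` is order-reversing for dominance on partitions of `N`. -/
theorem stmt3 (z N : ℕ) (hz : 1 ≤ z) (p q : Multiset ℕ)
    (hp : IsPartition p) (hq : IsPartition q)
    (hpN : p.sum = N) (hqN : q.sum = N) (h : Dom p q) :
    Dom (dcom z q) (dcom z p) := by
  intro k
  rw [psum_dcom hz q k, psum_dcom hz p k]
  obtain ⟨k0, hk0⟩ := exists_psum_eq p (k * z)
  have h1 := psum_le q k0 (k * z)
  have h2 := h k0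
  have h3 := sum_min_add p (k * z)
  have h4 := sum_min_add q (k * z)
  rw [hpN] at h3
  rw [hqN] at h4
  omega

end PartStmt
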